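/- arXiv:math/0404380 — 2 statements merged into one kernel-verified Lean document; each statement's English description precedes it below -/
import Mathlib

section
/- Let (X,d) be a proper, uniquely geodesic, geodesically complete metric space in which geodesics do not split, with convex unique midpoint map, and let J be a surjective isometry of the space C(X,d) of nonempty convex compact subsets of X endowed with the Hausdorff metric d_H such that J({p}) = {p} for every p ∈ X. Then J(B_r(p)) = B_r(p) for every p ∈ X and every r > 0, where B_r(p) is the closed ball of radius r around p. -/
open Metric Set TopologicalSpace

variable {X : Type*}

/-- A geodesic segment from `x` to `y`, parametrized by arclength on `[0, dist x y]`. -/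
def IsGeodesicSegment [MetricSpace X] (γ : ℝ → X) (x y : X) : Prop :=
  γ 0 = x ∧ γ (dist x y) = y ∧
    ∀ s ∈ Set.Icc (0 : ℝ) (dist x y), ∀ t ∈ Set.Icc (0 : ℝ) (dist x y),
      dist (γ s) (γ t) = |s - t|

/-- A metric space is geodesic if any two points are joined by a geodesic segment. -/
def IsGeodesicSpace (X : Type*) [MetricSpace X] : Prop :=
  ∀ x y : X, ∃ γ : ℝ → X, IsGeodesicSegment γ x y

/-- A metric space is uniquely geodesic if any two points are joined by a geodesic
segment, which is moreover unique (as a parametrized segment). -/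
def IsUniquelyGeodesic (X : Type*) [MetricSpace X] : Prop :=
  ∀ x y : X, (∃ γ : ℝ → X, IsGeodesicSegment γ x y) ∧
    ∀ γ γ' : ℝ → X, IsGeodesicSegment γ x y → IsGeodesicSegment γ' x y →
      ∀ t ∈ Set.Icc (0 : ℝ) (dist x y), γ t = γ' t

/-- Geodesic completeness: every geodesic segment extends to a full geodesic line,
i.e. an isometric embedding of `ℝ`. -/
def IsGeodesicallyComplete (X : Type*) [MetricSpace X] : Prop :=
  ∀ (x y : X) (γ : ℝ → X), IsGeodesicSegment γ x y →
    ∃ γ' : ℝ → X, Isometry γ' ∧ γ '' Set.Icc (0 : ℝ) (dist x y) ⊆ Set.range γ'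

/-- Geodesics do not split: the image of the bi-infinite geodesic extension of every
nondegenerate geodesic segment is unique. -/
def GeodesicsDoNotSplit (X : Type*) [MetricSpace X] : Prop :=
  ∀ (x y : X) (γ : ℝ → X), IsGeodesicSegment γ x y → x ≠ y →
    ∀ γ₁ γ₂ : ℝ → X, Isometry γ₁ → Isometry γ₂ →
      γ '' Set.Icc (0 : ℝ) (dist x y) ⊆ Set.range γ₁ →
      γ '' Set.Icc (0 : ℝ) (dist x y) ⊆ Set.range γ₂ →
      Set.range γ₁ = Set.range γ₂

/-- A subset is (geodesically) convex if with any two of its points it contains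
the image of every geodesic segment joining them. -/
def IsGeodConvex [MetricSpace X] (C : Set X) : Prop :=
  ∀ a ∈ C, ∀ b ∈ C, ∀ γ : ℝ → X, IsGeodesicSegment γ a b →
    γ '' Set.Icc (0 : ℝ) (dist a b) ⊆ C

/-- A midpoint map on a metric space: a symmetric map `m` with
`d(m(x,y),x) = d(x,y)/2 = d(m(x,y),y)`. -/
def IsMidpointMap [MetricSpace X] (m : X → X → X) : Prop :=
  (∀ x y, m x y = m y x) ∧
    ∀ x y, dist (m x y) x = dist x y / 2 ∧ dist (m x y) y = dist x y / 2

/-- A convex midpoint map: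
`d(m(x₁,y₁), m(x₂,y₂)) ≤ (d(x₁,x₂) + d(y₁,y₂))/2` for all points. -/
def IsConvexMidpointMap [MetricSpace X] (m : X → X → X) : Prop :=
  IsMidpointMap m ∧
    ∀ x₁ x₂ y₁ y₂ : X, dist (m x₁ y₁) (m x₂ y₂) ≤ (dist x₁ x₂ + dist y₁ y₂) / 2

/-- The space `𝒞(X,d)` of nonempty convex compact subsets of `X`, endowed with the
Hausdorff metric (as a subtype of `NonemptyCompacts X`, whose metric is the
Hausdorff distance). -/
abbrev ConvexCompacts (X : Type*) [MetricSpace X] :=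
  {A : NonemptyCompacts X // IsGeodConvex (A : Set X)}

lemma isGeodConvex_singleton [MetricSpace X] (p : X) : IsGeodConvex ({p} : Set X) := by
  rintro a ha b hb γ hγ x ⟨t, ht, rfl⟩
  rw [Set.mem_singleton_iff] at ha hb
  subst ha; subst hb
  rw [dist_self] at ht
  have : t = 0 := le_antisymm ht.2 ht.1
  subst this
  exact hγ.1

/-- The singleton `{p}` as an element of `𝒞(X,d)`. -/
def singletonCC [MetricSpace X] (p : X) : ConvexCompacts X :=
  ⟨⟨⟨{p}, isCompact_singleton⟩, Set.singleton_nonempty p⟩, isGeodConvex_singleton p⟩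

/-- The singleton `{p}` as an element of `𝔉(X,d)`, the space of nonempty compact
subsets of `X` with the Hausdorff metric. -/
def singletonNC [MetricSpace X] (p : X) : NonemptyCompacts X :=
  ⟨⟨{p}, isCompact_singleton⟩, Set.singleton_nonempty p⟩

/-- The closed `r`-neighborhood `N_r(A) = {x | ∃ a ∈ A, d(a,x) ≤ r}` of a set. -/
def closedNbhd [MetricSpace X] (r : ℝ) (A : Set X) : Set X :=
  {x : X | ∃ a ∈ A, dist a x ≤ r}

/-- A set is `m`-convex if it contains the `m`-midpoint of each pair of its points. -/
def MConvexSet [MetricSpace X] (m : X → X → X) (A : Set X) : Prop :=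
  ∀ a ∈ A, ∀ a' ∈ A, m a a' ∈ A

/-- The `m`-convex hull: the intersection of all closed `m`-convex sets containing `A`. -/
def mConvexHull [MetricSpace X] (m : X → X → X) (A : Set X) : Set X :=
  ⋂₀ {C : Set X | IsClosed C ∧ MConvexSet m C ∧ A ⊆ C}


section AuxLemmas
variable [MetricSpace X]

/-- An isometric line through x and y, suitably parametrized, is a geodesic segment. -/
lemma line_isGeodesicSegment {γ : ℝ → X} (hγ : Isometry γ) {x y : X}
    (h0 : γ 0 = x) (hd : γ (dist x y) = y) : IsGeodesicSegment γ x y := by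
  refine ⟨h0, hd, fun s _ t _ => ?_⟩
  rw [hγ.dist_eq, Real.dist_eq]

/-- Lemma A: existence of a line through two distinct points, normalized. -/
lemma exists_line (hug : IsUniquelyGeodesic X) (hgc : IsGeodesicallyComplete X)
    (x y : X) :
    ∃ γ : ℝ → X, Isometry γ ∧ γ 0 = x ∧ γ (dist x y) = y := by
  obtain ⟨⟨σ, hσ⟩, -⟩ := hug x y
  obtain ⟨γ', hγ', hsub⟩ := hgc x y σ hσ
  have hd : (0:ℝ) ≤ dist x y := dist_nonneg
  have hx : x ∈ Set.range γ' := by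
    refine hsub ⟨0, ⟨le_refl 0, hd⟩, hσ.1⟩
  have hy : y ∈ Set.range γ' := by
    refine hsub ⟨dist x y, ⟨hd, le_refl _⟩, hσ.2.1⟩
  obtain ⟨s, hs⟩ := hx
  obtain ⟨t, ht⟩ := hy
  have hst : |s - t| = dist x y := by
    rw [← Real.dist_eq, ← hγ'.dist_eq, hs, ht]
  rcases le_total s t with h | h
  · refine ⟨fun u => γ' (s + u), Isometry.of_dist_eq (fun a b => ?_), by simpa using hs, ?_⟩
    · rw [hγ'.dist_eq, Real.dist_eq, Real.dist_eq]; congr 1; ring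
    · have h2 : s + dist x y = t := by
        rw [← hst, abs_of_nonpos (by linarith)]; ring
      show γ' (s + dist x y) = y
      rw [h2, ht]
  · refine ⟨fun u => γ' (s - u), Isometry.of_dist_eq (fun a b => ?_), by simpa using hs, ?_⟩
    · rw [hγ'.dist_eq, Real.dist_eq, Real.dist_eq, abs_sub_comm]; congr 1; ring
    · have h2 : s - dist x y = t := by
        rw [← hst, abs_of_nonneg (by linarith)]; ring
      show γ' (s - dist x y) = y
      rw [h2, ht]


/-- Concatenation of geodesic segments when the triangle inequality is equality. -/
lemma concat_isGeodesicSegment {x y z : X} (h : dist x z = dist x y + dist y z)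
    {σ₁ σ₂ : ℝ → X} (h₁ : IsGeodesicSegment σ₁ x y) (h₂ : IsGeodesicSegment σ₂ y z)
    (hy : 0 < dist x y) (hz : 0 < dist y z) :
    IsGeodesicSegment (fun t => if t ≤ dist x y then σ₁ t else σ₂ (t - dist x y)) x z := by
  set d₁ := dist x y
  set d₂ := dist y z
  obtain ⟨ha1, hb1, hd1⟩ := h₁
  obtain ⟨ha2, hb2, hd2⟩ := h₂
  have key : ∀ s ∈ Set.Icc (0:ℝ) (dist x z), ∀ t ∈ Set.Icc (0:ℝ) (dist x z), s ≤ t →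
      dist ((fun t => if t ≤ d₁ then σ₁ t else σ₂ (t - d₁)) s)
        ((fun t => if t ≤ d₁ then σ₁ t else σ₂ (t - d₁)) t) = t - s := by
    intro s hs t ht hst
    simp only []
    rcases le_or_gt t d₁ with h1 | h1
    · rw [if_pos (hst.trans h1), if_pos h1,
        hd1 s ⟨hs.1, hst.trans h1⟩ t ⟨hs.1.trans hst, h1⟩, abs_of_nonpos (by linarith)]
      ring
    · rcases le_or_gt s d₁ with h2 | h2
      · rw [if_pos h2, if_neg (not_le.mpr h1)]
        have hts : t - d₁ ∈ Set.Icc (0:ℝ) d₂ := ⟨by linarith, by rw [h] at ht; linarith [ht.2]⟩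
        have e1 : dist (σ₁ s) y = d₁ - s := by
          rw [← hb1, hd1 s ⟨hs.1, h2⟩ d₁ ⟨dist_nonneg, le_refl _⟩, abs_of_nonpos (by linarith)]
          ring
        have e2 : dist y (σ₂ (t - d₁)) = t - d₁ := by
          rw [← ha2, dist_comm, hd2 (t - d₁) hts 0 ⟨le_refl _, dist_nonneg⟩,
            abs_of_nonneg (by linarith)]
          ring
        have hle : dist (σ₁ s) (σ₂ (t - d₁)) ≤ t - s := by
          calc dist (σ₁ s) (σ₂ (t - d₁)) ≤ dist (σ₁ s) y + dist y (σ₂ (t - d₁)) :=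
            dist_triangle _ _ _
          _ = t - s := by rw [e1, e2]; ring
        have e3 : dist x (σ₁ s) = s := by
          rw [← ha1, dist_comm, hd1 s ⟨hs.1, h2⟩ 0 ⟨le_refl _, dist_nonneg⟩,
            sub_zero, abs_of_nonneg hs.1]
        have e4 : dist (σ₂ (t - d₁)) z = dist x z - t := by
          nth_rewrite 1 [← hb2]
          rw [hd2 (t - d₁) hts d₂ ⟨dist_nonneg, le_refl _⟩, h,
            abs_of_nonpos (by rw [h] at ht; linarith [ht.2])]
          ring
        have hge : dist x z ≤ s + dist (σ₁ s) (σ₂ (t - d₁)) + (dist x z - t) := by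
          calc dist x z ≤ dist x (σ₁ s) + dist (σ₁ s) (σ₂ (t - d₁)) + dist (σ₂ (t - d₁)) z :=
            dist_triangle4 _ _ _ _
          _ = s + dist (σ₁ s) (σ₂ (t - d₁)) + (dist x z - t) := by rw [e3, e4]
        linarith
      · rw [if_neg (not_le.mpr h2), if_neg (not_le.mpr h1)]
        rw [hd2 (s - d₁) ⟨by linarith, by rw [h] at hs; linarith [hs.2]⟩
            (t - d₁) ⟨by linarith, by rw [h] at ht; linarith [ht.2]⟩,
            abs_of_nonpos (by linarith)]
        ring
  refine ⟨?_, ?_, ?_⟩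
  · simp only [if_pos (le_of_lt hy)]; exact ha1
  · have : ¬ (dist x z ≤ d₁) := by rw [h]; push_neg; linarith
    simp only [if_neg this]
    rw [h]
    have : d₁ + d₂ - d₁ = d₂ := by ring
    rw [this, hb2]
  · intro s hs t ht
    rcases le_total s t with hst | hst
    · rw [key s hs t ht hst, abs_of_nonpos (by linarith)]; ring
    · rw [dist_comm, key t ht s hs hst, abs_of_nonneg (by linarith)]

/-- Betweenness: a point metrically between the endpoints of a line lies on the line. -/
lemma between_on_line (hug : IsUniquelyGeodesic X) {γ : ℝ → X} (hγ : Isometry γ)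
    {x y z : X} (h0 : γ 0 = x) (hD : γ (dist x z) = z)
    (h : dist x z = dist x y + dist y z) (hy : 0 < dist x y) (hz : 0 < dist y z) :
    γ (dist x y) = y := by
  obtain ⟨⟨σ₁, hσ₁⟩, -⟩ := hug x y
  obtain ⟨⟨σ₂, hσ₂⟩, -⟩ := hug y z
  have hσ := concat_isGeodesicSegment h hσ₁ hσ₂ hy hz
  have hγseg := line_isGeodesicSegment hγ h0 hD
  have := (hug x z).2 γ _ hγseg hσ (dist x y) ⟨dist_nonneg, by linarith⟩
  rw [this]
  simp only [if_pos (le_refl (dist x y))]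
  exact hσ₁.2.1

/-- Antipode uniqueness: there is a unique point at distance `r` from `p` and `2r`
from `q`, when `q` is at distance `r` from `p`. -/
lemma antipode_unique (hug : IsUniquelyGeodesic X) (hgc : IsGeodesicallyComplete X)
    (hns : GeodesicsDoNotSplit X) {p q b a : X} {r : ℝ} (hr : 0 < r)
    (hqp : dist q p = r) (hpb : dist p b = r) (hqb : dist q b = 2 * r)
    (hqa : dist q a = 2 * r) (hpa : dist p a = r) : a = b := by
  obtain ⟨γ₁, hγ₁, h10, h1b⟩ := exists_line hug hgc q b
  obtain ⟨γ₂, hγ₂, h20, h2a⟩ := exists_line hug hgc q a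
  have hp1 : γ₁ (dist q p) = p :=
    between_on_line hug hγ₁ h10 h1b (by rw [hqb, hqp, hpb]; ring) (by rw [hqp]; exact hr)
      (by rw [hpb]; exact hr)
  have hp2 : γ₂ (dist q p) = p :=
    between_on_line hug hγ₂ h20 h2a (by rw [hqa, hqp, hpa]; ring) (by rw [hqp]; exact hr)
      (by rw [hpa]; exact hr)
  have hseg1 : IsGeodesicSegment γ₁ q p := line_isGeodesicSegment hγ₁ h10 hp1
  have hseg2 : IsGeodesicSegment γ₂ q p := line_isGeodesicSegment hγ₂ h20 hp2
  have hqnep : q ≠ p := by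
    intro hqp'
    rw [hqp', dist_self] at hqp
    exact absurd hqp.symm hr.ne'
  have hsub2 : γ₁ '' Set.Icc (0 : ℝ) (dist q p) ⊆ Set.range γ₂ := by
    rintro _ ⟨t, ht, rfl⟩
    rw [(hug q p).2 γ₁ γ₂ hseg1 hseg2 t ht]
    exact ⟨t, rfl⟩
  have hrange : Set.range γ₁ = Set.range γ₂ :=
    hns q p γ₁ hseg1 hqnep γ₁ γ₂ hγ₁ hγ₂ (Set.image_subset_range _ _) hsub2
  have ha : a ∈ Set.range γ₁ := by
    rw [hrange]; exact ⟨dist q a, h2a⟩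
  obtain ⟨u, hu⟩ := ha
  have habs1 : |u| = 2 * r := by
    have := hγ₁.dist_eq u 0
    rw [hu, h10, Real.dist_eq, sub_zero] at this
    rw [← this, dist_comm, hqa]
  have habs2 : |dist q p - u| = r := by
    have := hγ₁.dist_eq (dist q p) u
    rw [hu, hp1, Real.dist_eq] at this
    rw [← this, hpa]
  rw [hqp] at habs2
  have hu2 : u = 2 * r := by
    rcases abs_cases u with ⟨h1, -⟩ | ⟨h1, -⟩ <;>
      rcases abs_cases (r - u) with ⟨h2, -⟩ | ⟨h2, -⟩ <;> linarith
  have : dist q b = u := by rw [hqb, hu2]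
  rw [← hu, ← h1b, this]

end AuxLemmas

/-- **Lemma 3.4.** Under the hypotheses of Theorem 1.1, a surjective isometry of
`𝒞(X,d)` fixing all singletons fixes every closed ball. -/
theorem fixing_points_fixes_balls [MetricSpace X] [ProperSpace X]
    (hug : IsUniquelyGeodesic X) (hgc : IsGeodesicallyComplete X)
    (hns : GeodesicsDoNotSplit X)
    (m : X → X → X)
    (hmid : ∀ (x y : X) (γ : ℝ → X), IsGeodesicSegment γ x y → m x y = γ (dist x y / 2))
    (hconv : IsConvexMidpointMap m)
    (J : ConvexCompacts X ≃ᵢ ConvexCompacts X)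
    (hJ : ∀ p : X, J (singletonCC p) = singletonCC p) :
    ∀ (p : X) (r : ℝ), 0 < r → ∀ B : ConvexCompacts X,
      (B.1 : Set X) = Metric.closedBall p r →
      ((J B).1 : Set X) = Metric.closedBall p r := by

  intro p r hr B hB
  -- notation
  set A' : Set X := ((J B).1 : Set X) with hA'
  have hA'conv : IsGeodConvex A' := (J B).2
  have hA'compact : IsCompact A' := (J B).1.isCompact
  have hA'ne : A'.Nonempty := (J B).1.nonempty
  have hBne : (B.1 : Set X).Nonempty := B.1.nonempty
  have hfin : ∀ (s t : Set X), s.Nonempty → t.Nonempty → Bornology.IsBounded s → Bornology.IsBounded t →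
      EMetric.hausdorffEdist s t ≠ ⊤ := fun s t hs ht hbs hbt =>
    Metric.hausdorffEdist_ne_top_of_nonempty_of_bounded hs ht hbs hbt
  -- Key: Hausdorff distances from singletons agree
  have key : ∀ q : X, hausdorffDist ({q} : Set X) (Metric.closedBall p r)
      = hausdorffDist ({q} : Set X) A' := by
    intro q
    have h1 : dist (singletonCC q) B = dist (singletonCC q) (J B) := by
      conv_rhs => rw [← hJ q]
      rw [J.dist_eq]
    have h2 : dist (singletonCC q) B = hausdorffDist ({q} : Set X) (B.1 : Set X) := rfl
    have h3 : dist (singletonCC q) (J B) = hausdorffDist ({q} : Set X) A' := rfl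
    rw [← hB, ← h2, ← h3, h1]
  -- Step 1: A' ⊆ closed ball
  have step1 : A' ⊆ Metric.closedBall p r := by
    intro a ha
    have hfinA : EMetric.hausdorffEdist A' ({p} : Set X) ≠ ⊤ :=
      hfin _ _ hA'ne (Set.singleton_nonempty p) hA'compact.isBounded
        Bornology.isBounded_singleton
    have h1 : dist a p ≤ hausdorffDist A' ({p} : Set X) := by
      have := Metric.infDist_le_hausdorffDist_of_mem ha hfinA
      rwa [Metric.infDist_singleton] at this
    have h2 : hausdorffDist ({p} : Set X) (Metric.closedBall p r) ≤ r := by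
      apply Metric.hausdorffDist_le_of_mem_dist hr.le
      · intro x hx
        rw [Set.mem_singleton_iff] at hx
        refine ⟨p, Metric.mem_closedBall_self hr.le, ?_⟩
        rw [hx, dist_self]
        exact hr.le
      · intro y hy
        exact ⟨p, rfl, Metric.mem_closedBall.mp hy⟩
    have := (key p).symm.le.trans h2
    rw [Metric.hausdorffDist_comm] at this
    exact Metric.mem_closedBall.mpr (h1.trans this)
  -- Step 2: every boundary point is in A'
  have step2 : ∀ b : X, dist p b = r → b ∈ A' := by
    intro b hpb
    obtain ⟨γ, hγ, h0, hb⟩ := exists_line hug hgc p b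
    set q : X := γ (-r) with hq
    have hqp : dist q p = r := by
      rw [hq, ← h0, hγ.dist_eq, Real.dist_eq, sub_zero, abs_neg, abs_of_nonneg hr.le]
    have hqb : dist q b = 2 * r := by
      rw [hq, ← hb, hγ.dist_eq, Real.dist_eq, hpb]
      rw [abs_of_nonpos (by linarith)]
      ring
    -- lower bound on the Hausdorff distance
    have hbmem : b ∈ Metric.closedBall p r := by
      rw [Metric.mem_closedBall, dist_comm]
      exact hpb.le
    have hfinB : EMetric.hausdorffEdist (Metric.closedBall p r) ({q} : Set X) ≠ ⊤ :=
      hfin _ _ ⟨b, hbmem⟩ (Set.singleton_nonempty q)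
        Metric.isBounded_closedBall Bornology.isBounded_singleton
    have hlow : 2 * r ≤ hausdorffDist ({q} : Set X) (Metric.closedBall p r) := by
      have := Metric.infDist_le_hausdorffDist_of_mem hbmem hfinB
      rw [Metric.infDist_singleton, dist_comm, hqb] at this
      rwa [Metric.hausdorffDist_comm]
    rw [key q] at hlow
    -- maximizer of the distance to q on A'
    obtain ⟨a₀, ha₀, hmax⟩ := hA'compact.exists_isMaxOn hA'ne
      ((continuous_const.dist continuous_id).continuousOn :
        ContinuousOn (fun a : X => dist q a) A')
    have hup : hausdorffDist ({q} : Set X) A' ≤ dist q a₀ := by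
      apply Metric.hausdorffDist_le_of_mem_dist dist_nonneg
      · intro x hx
        rw [Set.mem_singleton_iff] at hx
        exact ⟨a₀, ha₀, by rw [hx]⟩
      · intro y hy
        exact ⟨q, rfl, by rw [dist_comm]; exact hmax hy⟩
    have h2r : 2 * r ≤ dist q a₀ := hlow.trans hup
    have hub : dist q a₀ ≤ dist q p + dist p a₀ := dist_triangle _ _ _
    have hpa₀ : dist p a₀ ≤ r := by
      have := step1 ha₀
      rw [Metric.mem_closedBall, dist_comm] at this
      exact this
    have hqa₀ : dist q a₀ = 2 * r := le_antisymm (by linarith [hqp ▸ hub]) h2r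
    have hpa₀' : dist p a₀ = r := by
      rw [hqp] at hub
      linarith
    have : a₀ = b := antipode_unique hug hgc hns hr hqp hpb hqb hqa₀ hpa₀'
    rwa [← this]
  -- Step 3: main convexity argument: points on lines through p within distance r
  have main : ∀ (γ : ℝ → X), Isometry γ → γ 0 = p → ∀ t : ℝ, |t| ≤ r → γ t ∈ A' := by
    intro γ hγ h0 t ht
    have hb : dist p (γ r) = r := by
      rw [← h0, hγ.dist_eq, Real.dist_eq, zero_sub, abs_neg, abs_of_nonneg hr.le]
    have hb' : dist p (γ (-r)) = r := by
      rw [← h0, hγ.dist_eq, Real.dist_eq, zero_sub, neg_neg, abs_of_nonneg hr.le]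
    have hmb : γ r ∈ A' := step2 _ hb
    have hmb' : γ (-r) ∈ A' := step2 _ hb'
    set σ : ℝ → X := fun u => γ (u - r) with hσdef
    have hσiso : Isometry σ := by
      apply Isometry.of_dist_eq
      intro a b
      rw [hσdef]
      simp only []
      rw [hγ.dist_eq, Real.dist_eq, Real.dist_eq]
      congr 1
      ring
    have hdbb : dist (γ (-r)) (γ r) = 2 * r := by
      rw [hγ.dist_eq, Real.dist_eq, abs_of_nonpos (by linarith)]
      ring
    have hσ0 : σ 0 = γ (-r) := by rw [hσdef]; simp only []; rw [zero_sub]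
    have hσ2r : σ (dist (γ (-r)) (γ r)) = γ r := by
      rw [hσdef, hdbb]
      simp only []
      congr 1
      ring
    have hσseg : IsGeodesicSegment σ (γ (-r)) (γ r) :=
      line_isGeodesicSegment hσiso hσ0 hσ2r
    have := hA'conv _ hmb' _ hmb σ hσseg
    have hmem : γ t ∈ σ '' Set.Icc (0 : ℝ) (dist (γ (-r)) (γ r)) := by
      refine ⟨t + r, ?_, ?_⟩
      · rw [hdbb]
        have h1 := abs_le.mp ht
        exact ⟨by linarith [h1.1], by linarith [h1.2]⟩
      · rw [hσdef]
        simp only []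
        congr 1
        ring
    exact this hmem
  -- Conclusion
  apply Set.Subset.antisymm step1
  intro x hx
  obtain ⟨γ, hγ, h0, hxx⟩ := exists_line hug hgc p x
  have := main γ hγ h0 (dist p x) (by rw [abs_of_nonneg dist_nonneg, dist_comm]; exact Metric.mem_closedBall.mp hx)
  rwa [hxx] at this
end

section
/- Let (X,d) be a proper, uniquely geodesic, geodesically complete metric space in which geodesics do not split, and let I be a surjective isometry of the space 𝔉(X,d) of nonempty compact subsets of X endowed with the Hausdorff metric d_H. Then I({p}) is a singleton for every p ∈ X. -/
open Metric Set TopologicalSpace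

variable {X : Type*}

/-!
Suppose `A = I {p}` has two points, and let `x, y ∈ A` realise its diameter `4 r`. Extending
the geodesic through `x` and `y` by `r` beyond both ends gives points `o, o'` with
`d(o, o') = 6 r`, each within `r` of `A`. Cutting the closed `r`-thickening of `A` down by the
complements of the open `2 r`-balls about `o`, about `o'`, about neither and about both gives
four compacts within `r` of `A` that are pairwise at Hausdorff distance `2 r`; their preimages
under `I` are four compacts within `r` of `{p}`, pairwise `2 r` apart.

That is impossible: if two compacts in the closed `r`-ball about `p` are `2 r` apart, a point
`b` of one is `2 r` away from all of the other, which is thus squeezed onto the continuation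
of the geodesic from `b` through `p`, at distance `r` beyond `p`. Since geodesics do not split,
that continuation is unique, so one of the two compacts is a singleton antipodal to a point
of the other. Hence three of the four compacts are such singletons, and two of them are the
same antipode of the third.
-/

section Geodesics

variable [MetricSpace X]

lemma IsUniquelyGeodesic.isGeodesicSpace (h : IsUniquelyGeodesic X) : IsGeodesicSpace X :=
  fun x y => (h x y).1

namespace IsGeodesicSegment

variable {γ : ℝ → X} {x y : X}

lemma dist_left (hγ : IsGeodesicSegment γ x y) {t : ℝ} (ht : t ∈ Icc 0 (dist x y)) :
    dist x (γ t) = t := by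
  rw [← hγ.1, hγ.2.2 0 (left_mem_Icc.2 dist_nonneg) t ht, zero_sub, abs_neg, abs_of_nonneg ht.1]

lemma dist_right (hγ : IsGeodesicSegment γ x y) {t : ℝ} (ht : t ∈ Icc 0 (dist x y)) :
    dist (γ t) y = dist x y - t := by
  conv_lhs => rw [← hγ.2.1]
  rw [hγ.2.2 t ht _ (right_mem_Icc.2 dist_nonneg), abs_of_nonpos (by linarith [ht.2])]
  ring

lemma of_dist_le (h0 : γ 0 = x) (h1 : γ (dist x y) = y)
    (hle : ∀ s ∈ Icc 0 (dist x y), ∀ t ∈ Icc 0 (dist x y), dist (γ s) (γ t) ≤ |s - t|) :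
    IsGeodesicSegment γ x y := by
  have hge : ∀ s ∈ Icc 0 (dist x y), ∀ t ∈ Icc 0 (dist x y), s ≤ t →
      t - s ≤ dist (γ s) (γ t) := by
    intro s hs t ht hst
    have h0s := hle 0 (left_mem_Icc.2 dist_nonneg) s hs
    have htd := hle t ht _ (right_mem_Icc.2 dist_nonneg)
    rw [h0, zero_sub, abs_neg, abs_of_nonneg hs.1] at h0s
    rw [h1, abs_of_nonpos (by linarith [ht.2])] at htd
    linarith [dist_triangle4 x (γ s) (γ t) y]
  refine ⟨h0, h1, fun s hs t ht => le_antisymm (hle s hs t ht) ?_⟩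
  rcases le_total s t with hst | hts
  · rw [abs_of_nonpos (by linarith)]
    linarith [hge s hs t ht hst]
  · rw [abs_of_nonneg (by linarith), dist_comm]
    exact hge t ht s hs hts

lemma append {γ₁ γ₂ : ℝ → X} {b p c : X} (h₁ : IsGeodesicSegment γ₁ b p)
    (h₂ : IsGeodesicSegment γ₂ p c) (hbc : dist b c = dist b p + dist p c) :
    IsGeodesicSegment (fun t => if t ≤ dist b p then γ₁ t else γ₂ (t - dist b p)) b c := by
  set δ := fun t => if t ≤ dist b p then γ₁ t else γ₂ (t - dist b p)
  have hδp : ∀ t ∈ Icc 0 (dist b c), dist (δ t) p = |t - dist b p| := by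
    intro t ht
    by_cases htp : t ≤ dist b p
    · simp only [δ, if_pos htp]
      rw [h₁.dist_right ⟨ht.1, htp⟩, abs_of_nonpos (by linarith)]
      ring
    · simp only [δ, if_neg htp]
      rw [dist_comm, h₂.dist_left ⟨by linarith, by linarith [ht.2]⟩,
        abs_of_nonneg (by linarith)]
  have hend : δ (dist b c) = c := by
    by_cases hle : dist b c ≤ dist b p
    · have hpc : p = c := dist_eq_zero.1 (by linarith [dist_nonneg (x := p) (y := c)])
      subst hpc
      simpa [δ] using h₁.2.1
    · simp only [δ, if_neg hle]
      rw [hbc, add_sub_cancel_left, h₂.2.1]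
  refine of_dist_le (by simp [δ, h₁.1]) hend fun s hs t ht => ?_
  by_cases hs₁ : s ≤ dist b p <;> by_cases ht₁ : t ≤ dist b p
  · simp only [δ, if_pos hs₁, if_pos ht₁]
    exact (h₁.2.2 s ⟨hs.1, hs₁⟩ t ⟨ht.1, ht₁⟩).le
  · calc dist (δ s) (δ t) ≤ dist (δ s) p + dist p (δ t) := dist_triangle _ _ _
      _ = |s - t| := by
        rw [dist_comm p, hδp s hs, hδp t ht, abs_of_nonpos (by linarith),
          abs_of_nonneg (by linarith), abs_of_nonpos (by linarith)]
        ring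
  · calc dist (δ s) (δ t) ≤ dist (δ s) p + dist p (δ t) := dist_triangle _ _ _
      _ = |s - t| := by
        rw [dist_comm p, hδp s hs, hδp t ht, abs_of_nonneg (by linarith),
          abs_of_nonpos (by linarith), abs_of_nonneg (by linarith)]
        ring
  · simp only [δ, if_neg hs₁, if_neg ht₁]
    rw [h₂.2.2 _ ⟨by linarith, by linarith [hs.2]⟩ _ ⟨by linarith, by linarith [ht.2]⟩,
      sub_sub_sub_cancel_right]

end IsGeodesicSegment

lemma IsGeodesicSpace.exists_dist_eq (h : IsGeodesicSpace X) (x y : X) {t : ℝ} (ht : 0 ≤ t)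
    (hty : t ≤ dist x y) : ∃ z, dist x z = t ∧ dist z y = dist x y - t := by
  obtain ⟨γ, hγ⟩ := h x y
  exact ⟨γ t, hγ.dist_left ⟨ht, hty⟩, hγ.dist_right ⟨ht, hty⟩⟩

lemma Real.exists_isometryEquiv (a b : ℝ) : ∃ e : ℝ ≃ᵢ ℝ, e 0 = a ∧ e (dist a b) = b := by
  rcases le_total a b with hab | hba
  · refine ⟨IsometryEquiv.addLeft a, by simp, ?_⟩
    simp [Real.dist_eq, abs_of_nonpos (sub_nonpos.2 hab)]
  · refine ⟨IsometryEquiv.subLeft a, by simp, ?_⟩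
    simp [Real.dist_eq, abs_of_nonneg (sub_nonneg.2 hba)]

lemma IsGeodesicallyComplete.exists_isometry (h : IsGeodesicallyComplete X) {γ : ℝ → X}
    {x y : X} (hγ : IsGeodesicSegment γ x y) :
    ∃ L : ℝ → X, Isometry L ∧ L 0 = x ∧ L (dist x y) = y ∧
      γ '' Icc 0 (dist x y) ⊆ range L := by
  obtain ⟨L, hL, hsub⟩ := h x y γ hγ
  obtain ⟨u, hu⟩ := hsub ⟨0, left_mem_Icc.2 dist_nonneg, hγ.1⟩
  obtain ⟨v, hv⟩ := hsub ⟨_, right_mem_Icc.2 dist_nonneg, hγ.2.1⟩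
  obtain ⟨e, he0, he1⟩ := Real.exists_isometryEquiv u v
  have huv : dist u v = dist x y := by rw [← hL.dist_eq, hu, hv]
  refine ⟨L ∘ e, hL.comp e.isometry, by simp [he0, hu], ?_, ?_⟩
  · simp [← huv, he1, hv]
  · rwa [e.surjective.range_comp]

end Geodesics

section Antipodes

variable [MetricSpace X] (hX : IsGeodesicSpace X) (hgc : IsGeodesicallyComplete X)
  (hns : GeodesicsDoNotSplit X)
include hX hgc hns

/-- The broken geodesic `[b, p] ∪ [p, z]` is a geodesic, and a line through it cannot split off
from `L`. -/
lemma Isometry.apply_dist_add_dist_eq {γ L : ℝ → X} {b p z : X} (hγ : IsGeodesicSegment γ b p)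
    (hbp : b ≠ p) (hL : Isometry L) (hL0 : L 0 = b) (hLp : L (dist b p) = p)
    (hγL : γ '' Icc 0 (dist b p) ⊆ range L) (hz : dist b z = dist b p + dist p z) :
    L (dist b p + dist p z) = z := by
  obtain ⟨γ₂, hγ₂⟩ := hX p z
  have hδ := hγ.append hγ₂ hz
  obtain ⟨L', hL', hδL'⟩ := hgc b z _ hδ
  have hγL' : γ '' Icc 0 (dist b p) ⊆ range L' := by
    rintro _ ⟨t, ht, rfl⟩
    exact hδL' ⟨t, ⟨ht.1, ht.2.trans (by linarith [dist_nonneg (x := p) (y := z)])⟩, if_pos ht.2⟩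
  have hrange : range L' = range L := hns b p γ hγ hbp L' L hL' hL hγL' hγL
  obtain ⟨t, rfl⟩ : z ∈ range L :=
    hrange ▸ hδL' ⟨dist b z, right_mem_Icc.2 dist_nonneg, hδ.2.1⟩
  have hbp₀ : 0 < dist b p := dist_pos.2 hbp
  have h0 : dist b (L t) = |t| := by rw [← hL0, hL.dist_eq, Real.dist_eq, zero_sub, abs_neg]
  have h1 : dist p (L t) = |dist b p - t| := by rw [← hLp, hL.dist_eq, Real.dist_eq, hLp]
  rw [h0, h1] at hz
  congr 1
  rcases abs_cases t with ⟨ht, -⟩ | ⟨ht, -⟩ <;>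
    rcases abs_cases (dist b p - t) with ⟨hpt, -⟩ | ⟨hpt, -⟩ <;>
    linarith

lemma eq_of_dist_eq_add {b p c c' : X} (hbp : b ≠ p) (hc : dist b c = dist b p + dist p c)
    (hc' : dist b c' = dist b p + dist p c') (hcc' : dist p c = dist p c') : c = c' := by
  obtain ⟨γ, hγ⟩ := hX b p
  obtain ⟨L, hL, hL0, hLp, hγL⟩ := hgc.exists_isometry hγ
  rw [← hL.apply_dist_add_dist_eq hX hgc hns hγ hbp hL0 hLp hγL hc,
    ← hL.apply_dist_add_dist_eq hX hgc hns hγ hbp hL0 hLp hγL hc', hcc']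

lemma eq_of_mem_sphere_of_dist_eq_two_mul {p u v w : X} {r : ℝ} (hr : 0 < r)
    (hu : u ∈ sphere p r) (hv : v ∈ sphere p r) (hw : w ∈ sphere p r)
    (huv : dist u v = 2 * r) (huw : dist u w = 2 * r) : v = w := by
  rw [mem_sphere] at hu
  rw [mem_sphere_comm, mem_sphere] at hv hw
  refine eq_of_dist_eq_add hX hgc hns (b := u) (p := p) (fun h => ?_) ?_ ?_ (hv.trans hw.symm)
  · rw [h, dist_self] at hu
    linarith
  · linarith
  · linarith

end Antipodes

section HausdorffMetric

variable [MetricSpace X]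

lemma TopologicalSpace.NonemptyCompacts.infDist_le_dist_of_mem {A B : NonemptyCompacts X}
    {z : X} (hz : z ∈ A) : infDist z B ≤ dist A B :=
  infDist_le_hausdorffDist_of_mem hz (edist_ne_top A B)

lemma TopologicalSpace.NonemptyCompacts.exists_dist_le_infDist (A B : NonemptyCompacts X) :
    (∃ a ∈ A, dist A B ≤ infDist a B) ∨ ∃ b ∈ B, dist A B ≤ infDist b A := by
  obtain ⟨a, ha, hmaxa⟩ :=
    A.isCompact.exists_isMaxOn A.nonempty (continuous_infDist_pt (B : Set X)).continuousOn
  obtain ⟨b, hb, hmaxb⟩ :=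
    B.isCompact.exists_isMaxOn B.nonempty (continuous_infDist_pt (A : Set X)).continuousOn
  have hle : dist A B ≤ max (infDist a B) (infDist b A) :=
    hausdorffDist_le_of_infDist (le_max_of_le_left infDist_nonneg)
      (fun z hz => (isMaxOn_iff.1 hmaxa z hz).trans (le_max_left _ _))
      (fun z hz => (isMaxOn_iff.1 hmaxb z hz).trans (le_max_right _ _))
  rcases le_max_iff.1 hle with h | h
  exacts [Or.inl ⟨a, ha, h⟩, Or.inr ⟨b, hb, h⟩]

def IsDiametralQuadruple {M : Type*} [PseudoMetricSpace M] (z : M) (r : ℝ) (a b c d : M) :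
    Prop :=
  (dist a z ≤ r ∧ dist b z ≤ r ∧ dist c z ≤ r ∧ dist d z ≤ r) ∧
    dist a b = 2 * r ∧ dist a c = 2 * r ∧ dist a d = 2 * r ∧ dist b c = 2 * r ∧
      dist b d = 2 * r ∧ dist c d = 2 * r

lemma IsDiametralQuadruple.map {M N : Type*} [PseudoMetricSpace M] [PseudoMetricSpace N]
    {f : M → N} (hf : Isometry f) {z : M} {r : ℝ} {a b c d : M}
    (h : IsDiametralQuadruple z r a b c d) :
    IsDiametralQuadruple (f z) r (f a) (f b) (f c) (f d) := by
  simpa only [IsDiametralQuadruple, hf.dist_eq] using h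

lemma dist_eq_two_mul_of_mem_of_forall_le_dist {A B C : NonemptyCompacts X} {o : X} {r : ℝ}
    (hB : dist B A ≤ r) (hC : dist C A ≤ r) (ho : o ∈ B) (hfar : ∀ c ∈ C, 2 * r ≤ dist o c) :
    dist B C = 2 * r :=
  le_antisymm (by linarith [dist_triangle_right B C A])
    (((le_infDist C.nonempty).2 hfar).trans (NonemptyCompacts.infDist_le_dist_of_mem ho))

variable (hX : IsGeodesicSpace X) (hgc : IsGeodesicallyComplete X)
  (hns : GeodesicsDoNotSplit X)
include hX hgc hns

lemma exists_eq_singleton_of_two_mul_le_dist {p b : X} {r : ℝ} (hr : 0 < r)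
    (hb : dist b p ≤ r) {C : NonemptyCompacts X} (hC : ∀ c ∈ C, dist c p ≤ r)
    (hfar : ∀ c ∈ C, 2 * r ≤ dist b c) : ∃ u ∈ sphere p r, C = {u} := by
  have hbc : ∀ c ∈ C, dist b p = r ∧ dist p c = r ∧ dist b c = dist b p + dist p c := by
    intro c hc
    have := dist_triangle_right b c p
    have := hC c hc
    have := hfar c hc
    rw [dist_comm p c]
    exact ⟨by linarith, by linarith, by linarith⟩
  obtain ⟨c₀, hc₀⟩ := C.nonempty
  have hbp : b ≠ p := by
    rintro rfl
    linarith [(hbc c₀ hc₀).1, dist_self b]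
  refine ⟨c₀, by rw [mem_sphere, dist_comm]; exact (hbc c₀ hc₀).2.1, ?_⟩
  ext c
  simp only [SetLike.mem_coe, NonemptyCompacts.mem_singleton]
  refine ⟨fun hc => ?_, fun h => h ▸ hc₀⟩
  exact eq_of_dist_eq_add hX hgc hns hbp (hbc c hc).2.2 (hbc c₀ hc₀).2.2
    ((hbc c hc).2.1.trans (hbc c₀ hc₀).2.1.symm)

lemma exists_eq_singleton_of_dist_eq_two_mul {p : X} {r : ℝ} (hr : 0 < r)
    {C D : NonemptyCompacts X} (hC : dist C {p} ≤ r) (hD : dist D {p} ≤ r)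
    (hCD : dist C D = 2 * r) : (∃ u ∈ sphere p r, C = {u}) ∨ ∃ u ∈ sphere p r, D = {u} := by
  have hball : ∀ {E : NonemptyCompacts X}, dist E {p} ≤ r → ∀ z ∈ E, dist z p ≤ r :=
    fun hE z hz => by
      simpa [infDist_singleton] using (NonemptyCompacts.infDist_le_dist_of_mem hz).trans hE
  rcases C.exists_dist_le_infDist D with ⟨a, ha, h⟩ | ⟨b, hb, h⟩
  · exact .inr <| exists_eq_singleton_of_two_mul_le_dist hX hgc hns hr (hball hC a ha)
      (hball hD) fun c hc => hCD ▸ h.trans (infDist_le_dist_of_mem hc)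
  · exact .inl <| exists_eq_singleton_of_two_mul_le_dist hX hgc hns hr (hball hD b hb)
      (hball hC) fun c hc => hCD ▸ h.trans (infDist_le_dist_of_mem hc)

lemma not_isDiametralQuadruple_singleton {r : ℝ} (hr : 0 < r) (p : X)
    (C₁ C₂ C₃ C₄ : NonemptyCompacts X) :
    ¬ IsDiametralQuadruple ({p} : NonemptyCompacts X) r C₁ C₂ C₃ C₄ := by
  rintro ⟨⟨h₁, h₂, h₃, h₄⟩, h₁₂, h₁₃, h₁₄, h₂₃, h₂₄, h₃₄⟩
  let S (C : NonemptyCompacts X) : Prop := ∃ u ∈ sphere p r, C = {u}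
  have pair {C D : NonemptyCompacts X} (hC : dist C {p} ≤ r) (hD : dist D {p} ≤ r)
      (hCD : dist C D = 2 * r) : S C ∨ S D :=
    exists_eq_singleton_of_dist_eq_two_mul hX hgc hns hr hC hD hCD
  have triple {C D E : NonemptyCompacts X} (hC : S C) (hD : S D) (hE : S E)
      (hCD : dist C D = 2 * r) (hCE : dist C E = 2 * r) (hDE : dist D E = 2 * r) : False := by
    obtain ⟨u, hu, rfl⟩ := hC
    obtain ⟨v, hv, rfl⟩ := hD
    obtain ⟨w, hw, rfl⟩ := hE
    have hdist (x y : X) : dist ({x} : NonemptyCompacts X) {y} = dist x y :=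
      hausdorffDist_singleton
    rw [hdist] at hCD hCE hDE
    rw [eq_of_mem_sphere_of_dist_eq_two_mul hX hgc hns hr hu hv hw hCD hCE, dist_self] at hDE
    linarith
  -- Among any two of the four sets one is an antipodal singleton, so three of them are.
  by_cases S₁ : S C₁
  · by_cases S₂ : S C₂
    · rcases pair h₃ h₄ h₃₄ with S₃ | S₄
      · exact triple S₁ S₂ S₃ h₁₂ h₁₃ h₂₃
      · exact triple S₁ S₂ S₄ h₁₂ h₁₄ h₂₄
    · exact triple S₁ ((pair h₂ h₃ h₂₃).resolve_left S₂) ((pair h₂ h₄ h₂₄).resolve_left S₂)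
        h₁₃ h₁₄ h₃₄
  · exact triple ((pair h₁ h₂ h₁₂).resolve_left S₁) ((pair h₁ h₃ h₁₃).resolve_left S₁)
      ((pair h₁ h₄ h₁₄).resolve_left S₁) h₂₃ h₂₄ h₃₄

end HausdorffMetric

section Construction

variable [MetricSpace X]

lemma IsCompact.exists_forall_dist_le_dist {A : Set X} (hA : IsCompact A) (hne : A.Nonempty) :
    ∃ x ∈ A, ∃ y ∈ A, ∀ a ∈ A, ∀ b ∈ A, dist a b ≤ dist x y := by
  obtain ⟨q, hq, hmax⟩ := (hA.prod hA).exists_isMaxOn (hne.prod hne) continuous_dist.continuousOn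
  exact ⟨q.1, hq.1, q.2, hq.2, fun a ha b hb => isMaxOn_iff.1 hmax (a, b) ⟨ha, hb⟩⟩

lemma IsGeodesicSpace.exists_dist_le_two_mul_le_dist (hX : IsGeodesicSpace X) {o o' a : X}
    {r : ℝ} (hr : 0 ≤ r) (ha : 3 * r ≤ dist o a) (ho' : dist o a + r ≤ dist o o') :
    ∃ b, dist a b ≤ r ∧ 2 * r ≤ dist o b ∧ 2 * r ≤ dist o' b := by
  obtain ⟨b, hob, hba⟩ := hX.exists_dist_eq o a (t := dist o a - r) (by linarith) (by linarith)
  refine ⟨b, by rw [dist_comm, hba]; linarith, by linarith, ?_⟩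
  linarith [dist_triangle o b o', dist_comm b o']

lemma IsGeodesicallyComplete.exists_dist_eq_add_two_mul (hX : IsGeodesicSpace X)
    (hgc : IsGeodesicallyComplete X) (x y : X) {r : ℝ} (hr : 0 ≤ r) :
    ∃ o o' : X, dist o x = r ∧ dist o' y = r ∧ dist o o' = dist x y + 2 * r := by
  obtain ⟨γ, hγ⟩ := hX x y
  obtain ⟨L, hL, hL0, hL1, -⟩ := hgc.exists_isometry hγ
  refine ⟨L (-r), L (dist x y + r), ?_, ?_, ?_⟩
  · rw [← hL0, hL.dist_eq, Real.dist_eq, sub_zero, abs_neg, abs_of_nonneg hr]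
  · have h := hL.dist_eq (dist x y + r) (dist x y)
    rw [hL1] at h
    rw [h, Real.dist_eq, add_sub_cancel_left, abs_of_nonneg hr]
  · rw [hL.dist_eq, Real.dist_eq, abs_of_nonpos (by linarith [dist_nonneg (x := x) (y := y)])]
    ring

variable [ProperSpace X]

lemma exists_nonemptyCompacts_eq_cthickening_inter (A : NonemptyCompacts X) {r : ℝ} (hr : 0 ≤ r)
    {U : Set X} (hU : IsClosed U) (hAU : ∀ a ∈ A, ∃ b ∈ U, dist a b ≤ r) :
    ∃ B : NonemptyCompacts X, (B : Set X) = cthickening r A ∩ U ∧ dist B A ≤ r := by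
  have hmem {a b : X} (ha : a ∈ A) (hab : dist a b ≤ r) : b ∈ cthickening r (A : Set X) :=
    mem_cthickening_of_dist_le b a r A ha (by rwa [dist_comm])
  obtain ⟨a₀, ha₀⟩ := A.nonempty
  obtain ⟨b₀, hb₀U, hab₀⟩ := hAU a₀ ha₀
  refine ⟨⟨⟨_, A.isCompact.cthickening.inter_right hU⟩, b₀, hmem ha₀ hab₀, hb₀U⟩, rfl, ?_⟩
  refine hausdorffDist_le_of_mem_dist hr (fun b hb => ?_) fun a ha => ?_
  · simpa [A.isCompact.cthickening_eq_biUnion_closedBall hr] using hb.1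
  · obtain ⟨b, hbU, hab⟩ := hAU a ha
    exact ⟨b, ⟨hmem ha hab, hbU⟩, hab⟩

lemma exists_isDiametralQuadruple_of_mem_cthickening (A : NonemptyCompacts X) {o o' : X}
    {r : ℝ} (hr : 0 ≤ r) (ho : o ∈ cthickening r (A : Set X))
    (ho' : o' ∈ cthickening r (A : Set X)) (hoo' : 2 * r ≤ dist o o')
    (hA : ∀ a ∈ A, ∃ b, dist a b ≤ r ∧ 2 * r ≤ dist o b ∧ 2 * r ≤ dist o' b) :
    ∃ B₁ B₂ B₃ B₄ : NonemptyCompacts X, IsDiametralQuadruple A r B₁ B₂ B₃ B₄ := by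
  have hfar (q : X) : IsClosed {z | 2 * r ≤ dist q z} :=
    isClosed_le continuous_const (continuous_const.dist continuous_id)
  obtain ⟨B₁, hB₁, hd₁⟩ := exists_nonemptyCompacts_eq_cthickening_inter A hr (hfar o')
    fun a ha => (hA a ha).imp fun _ ⟨hab, _, hb⟩ => ⟨hb, hab⟩
  obtain ⟨B₂, hB₂, hd₂⟩ := exists_nonemptyCompacts_eq_cthickening_inter A hr (hfar o)
    fun a ha => (hA a ha).imp fun _ ⟨hab, hb, _⟩ => ⟨hb, hab⟩
  obtain ⟨B₃, hB₃, hd₃⟩ := exists_nonemptyCompacts_eq_cthickening_inter A hr isClosed_univ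
    fun a _ => ⟨a, mem_univ a, (dist_self a).trans_le hr⟩
  obtain ⟨B₄, hB₄, hd₄⟩ :=
    exists_nonemptyCompacts_eq_cthickening_inter A hr ((hfar o).inter (hfar o'))
      fun a ha => (hA a ha).imp fun _ ⟨hab, hb, hb'⟩ => ⟨⟨hb, hb'⟩, hab⟩
  have mem {B : NonemptyCompacts X} {U : Set X} (hB : (B : Set X) = cthickening r A ∩ U)
      {z : X} : z ∈ B ↔ z ∈ cthickening r (A : Set X) ∧ z ∈ U := by
    rw [← SetLike.mem_coe, hB, mem_inter_iff]
  have ho₁ : o ∈ B₁ := (mem hB₁).2 ⟨ho, show 2 * r ≤ dist o' o from dist_comm o o' ▸ hoo'⟩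
  have ho'₂ : o' ∈ B₂ := (mem hB₂).2 ⟨ho', hoo'⟩
  have ho₃ : o ∈ B₃ := (mem hB₃).2 ⟨ho, mem_univ o⟩
  have ho'₃ : o' ∈ B₃ := (mem hB₃).2 ⟨ho', mem_univ o'⟩
  have far₁ : ∀ c ∈ B₁, 2 * r ≤ dist o' c := fun c hc => ((mem hB₁).1 hc).2
  have far₂ : ∀ c ∈ B₂, 2 * r ≤ dist o c := fun c hc => ((mem hB₂).1 hc).2
  have far₄ : ∀ c ∈ B₄, 2 * r ≤ dist o c := fun c hc => ((mem hB₄).1 hc).2.1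
  have far₄' : ∀ c ∈ B₄, 2 * r ≤ dist o' c := fun c hc => ((mem hB₄).1 hc).2.2
  refine ⟨B₁, B₂, B₃, B₄, ⟨hd₁, hd₂, hd₃, hd₄⟩, ?_, ?_, ?_, ?_, ?_, ?_⟩
  · rw [dist_comm]
    exact dist_eq_two_mul_of_mem_of_forall_le_dist hd₂ hd₁ ho'₂ far₁
  · rw [dist_comm]
    exact dist_eq_two_mul_of_mem_of_forall_le_dist hd₃ hd₁ ho'₃ far₁
  · exact dist_eq_two_mul_of_mem_of_forall_le_dist hd₁ hd₄ ho₁ far₄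
  · rw [dist_comm]
    exact dist_eq_two_mul_of_mem_of_forall_le_dist hd₃ hd₂ ho₃ far₂
  · exact dist_eq_two_mul_of_mem_of_forall_le_dist hd₂ hd₄ ho'₂ far₄'
  · exact dist_eq_two_mul_of_mem_of_forall_le_dist hd₃ hd₄ ho₃ far₄

lemma exists_isDiametralQuadruple (hX : IsGeodesicSpace X) (hgc : IsGeodesicallyComplete X)
    (A : NonemptyCompacts X) (hA : ∀ x, (A : Set X) ≠ {x}) :
    ∃ r > 0, ∃ B₁ B₂ B₃ B₄ : NonemptyCompacts X, IsDiametralQuadruple A r B₁ B₂ B₃ B₄ := by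
  obtain ⟨x, hx, y, hy, hdiam⟩ := A.isCompact.exists_forall_dist_le_dist A.nonempty
  obtain ⟨z₁, hz₁, z₂, hz₂, hz⟩ :=
    A.nonempty.exists_eq_singleton_or_nontrivial.resolve_left fun ⟨z, hAz⟩ => hA z hAz
  obtain ⟨r, hxy⟩ : ∃ r, dist x y = 4 * r := ⟨dist x y / 4, by ring⟩
  have hr : 0 < r := by linarith [(dist_pos.2 hz).trans_le (hdiam z₁ hz₁ z₂ hz₂)]
  obtain ⟨o, o', hox, ho'y, hoo'⟩ := hgc.exists_dist_eq_add_two_mul hX x y hr.le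
  have hoA : ∀ a ∈ A, dist o a + r ≤ dist o o' := fun a ha => by
    linarith [dist_triangle o x a, hdiam x hx a ha]
  have ho'A : ∀ a ∈ A, dist o' a + r ≤ dist o' o := fun a ha => by
    linarith [dist_triangle o' y a, hdiam a ha y hy, dist_comm a y, dist_comm o o']
  refine ⟨r, hr, exists_isDiametralQuadruple_of_mem_cthickening A hr.le
    (mem_cthickening_of_dist_le o x r A hx hox.le) (mem_cthickening_of_dist_le o' y r A hy ho'y.le)
    (by linarith) fun a ha => ?_⟩
  -- `dist o o' = 6 r`, so every point of `A` is `3 r` away from `o` or from `o'`.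
  rcases le_total (3 * r) (dist o a) with h | h
  · exact hX.exists_dist_le_two_mul_le_dist hr.le h (hoA a ha)
  · obtain ⟨b, hab, hb', hb⟩ := hX.exists_dist_le_two_mul_le_dist hr.le
      (by linarith [dist_triangle o a o', dist_comm a o']) (ho'A a ha)
    exact ⟨b, hab, hb, hb'⟩

end Construction

/-- **Lemma 5.2.** Every surjective isometry of `𝔉(X,d)` over a proper, uniquely
geodesic, geodesically complete space in which geodesics do not split maps singletons
to singletons. -/
theorem image_of_points_are_points_compacts [MetricSpace X] [ProperSpace X]
    (hug : IsUniquelyGeodesic X) (hgc : IsGeodesicallyComplete X)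
    (hns : GeodesicsDoNotSplit X)
    (I : NonemptyCompacts X ≃ᵢ NonemptyCompacts X) :
    ∀ p : X, ∃ x : X, ((I (singletonNC p)) : Set X) = {x} := by
  intro p
  by_contra! hp
  obtain ⟨r, hr, B₁, B₂, B₃, B₄, hB⟩ :=
    exists_isDiametralQuadruple hug.isGeodesicSpace hgc _ hp
  have hB' := hB.map I.symm.isometry
  rw [I.symm_apply_apply] at hB'
  exact not_isDiametralQuadruple_singleton hug.isGeodesicSpace hgc hns hr p _ _ _ _ hB'
end
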